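/- (Corollary: large noise disparity.) Fix a positive integer k, and for ν > 0 define f_k(ν) := (1/V_{1,k})·(2πν)^{−k/2}·∫_{B_k} exp(−‖x‖²/(2ν)) dx, where B_k is the closed unit ball in ℝ^k and V_{1,k} = π^{k/2}/Γ(k/2+1) is its volume. Let (σ_{R,m}²)_{m≥1} and (σ_{P,m}²)_{m≥1} be sequences of positive reals with lim_{m→∞} σ_{R,m}² = c for some c > 0 and lim_{m→∞} σ_{P,m}²/σ_{R,m}² = ∞, and set ν_{R,m} := 2σ_{R,m}² and ν_{P,m} := σ_{R,m}² + σ_{P,m}². Then lim_{m→∞} f_k(ν_{R,m})/f_k(ν_{P,m}) = ∞, and consequently lim_{m→∞} f_k(ν_{R,m})/( f_k(ν_{R,m}) + f_k(ν_{P,m}) ) = 1. -/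

import Mathlib

open Real MeasureTheory Filter

/-- `f_k(ν) := (1/V_{1,k})·(2πν)^{−k/2}·∫_{B_k} exp(−‖x‖²/(2ν)) dx`, the density at `0` of
`X + Z` for `X` uniform on the unit ball `B_k ⊆ ℝ^k` and `Z ~ N(0, ν I_k)` independent.
Here `V_{1,k} = π^{k/2}/Γ(k/2+1)` is the volume of the unit ball. -/
noncomputable def densAtZero (k : ℕ) (ν : ℝ) : ℝ :=
  (1 / (Real.pi ^ ((k : ℝ) / 2) / Real.Gamma ((k : ℝ) / 2 + 1))) *
    (2 * Real.pi * ν) ^ (-(k : ℝ) / 2) *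
    ∫ x in Metric.closedBall (0 : EuclideanSpace ℝ (Fin k)) 1,
      Real.exp (-‖x‖ ^ 2 / (2 * ν))

/-! On the unit ball the Gaussian factor `exp (-‖x‖² / (2ν))` lies between `exp (-1 / (2ν))` and
`1`, so up to a constant depending only on `k`, `f_k(ν)` is `(2πν)^{-k/2}` times a factor in
`[exp (-1 / (2ν)), 1]`. Hence
`f_k(ν_R) / f_k(ν_P) ≥ exp (-1 / (2ν_R)) (ν_P / ν_R)^{k/2}`; the exponential factor tends to
`exp (-1 / (4c)) > 0` and `ν_P / ν_R = (1 + σ_P² / σ_R²) / 2 → ∞`. -/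

open Metric Topology

section GaussianOnBall

variable {E : Type*} [NormedAddCommGroup E] [MeasurableSpace E] [BorelSpace E] [ProperSpace E]
  (μ : Measure E) [IsFiniteMeasureOnCompacts μ]

lemma integrableOn_exp_neg_sq_norm_div_closedBall (r ν : ℝ) :
    IntegrableOn (fun x : E => exp (-‖x‖ ^ 2 / (2 * ν))) (closedBall 0 r) μ :=
  (by fun_prop : Continuous fun x : E => exp (-‖x‖ ^ 2 / (2 * ν))).continuousOn.integrableOn_compact
    (isCompact_closedBall 0 r)

lemma setIntegral_exp_neg_sq_norm_div_le {ν : ℝ} (hν : 0 ≤ ν) (r : ℝ) :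
    ∫ x in closedBall (0 : E) r, exp (-‖x‖ ^ 2 / (2 * ν)) ∂μ ≤ μ.real (closedBall 0 r) := by
  calc ∫ x in closedBall (0 : E) r, exp (-‖x‖ ^ 2 / (2 * ν)) ∂μ
      ≤ ∫ _ in closedBall (0 : E) r, (1 : ℝ) ∂μ := by
        refine setIntegral_mono_on (integrableOn_exp_neg_sq_norm_div_closedBall μ r ν)
          (integrableOn_const measure_closedBall_lt_top.ne) measurableSet_closedBall fun x _ => ?_
        rw [exp_le_one_iff, neg_div]
        exact neg_nonpos.2 (by positivity)
    _ = μ.real (closedBall 0 r) := by simp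

lemma exp_mul_measureReal_le_setIntegral_exp_neg_sq_norm_div {ν : ℝ} (hν : 0 ≤ ν) (r : ℝ) :
    exp (-r ^ 2 / (2 * ν)) * μ.real (closedBall 0 r) ≤
      ∫ x in closedBall (0 : E) r, exp (-‖x‖ ^ 2 / (2 * ν)) ∂μ := by
  calc exp (-r ^ 2 / (2 * ν)) * μ.real (closedBall 0 r)
      = ∫ _ in closedBall (0 : E) r, exp (-r ^ 2 / (2 * ν)) ∂μ := by simp [mul_comm]
    _ ≤ ∫ x in closedBall (0 : E) r, exp (-‖x‖ ^ 2 / (2 * ν)) ∂μ := by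
        refine setIntegral_mono_on (integrableOn_const measure_closedBall_lt_top.ne)
          (integrableOn_exp_neg_sq_norm_div_closedBall μ r ν) measurableSet_closedBall
          fun x hx => exp_le_exp.2 ?_
        rw [neg_div, neg_div, neg_le_neg_iff]
        gcongr
        exact mem_closedBall_zero_iff.1 hx

lemma exp_mul_setIntegral_exp_neg_sq_norm_div_le {ν ν' : ℝ} (hν : 0 ≤ ν) (hν' : 0 ≤ ν') (r : ℝ) :
    exp (-r ^ 2 / (2 * ν)) * ∫ x in closedBall (0 : E) r, exp (-‖x‖ ^ 2 / (2 * ν')) ∂μ ≤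
      ∫ x in closedBall (0 : E) r, exp (-‖x‖ ^ 2 / (2 * ν)) ∂μ :=
  (mul_le_mul_of_nonneg_left (setIntegral_exp_neg_sq_norm_div_le μ hν' r) (exp_pos _).le).trans
    (exp_mul_measureReal_le_setIntegral_exp_neg_sq_norm_div μ hν r)

lemma setIntegral_exp_neg_sq_norm_div_pos [μ.IsOpenPosMeasure] {ν r : ℝ} (hν : 0 ≤ ν)
    (hr : 0 < r) : 0 < ∫ x in closedBall (0 : E) r, exp (-‖x‖ ^ 2 / (2 * ν)) ∂μ := by
  refine lt_of_lt_of_le (mul_pos (exp_pos _) ?_)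
    (exp_mul_measureReal_le_setIntegral_exp_neg_sq_norm_div μ hν r)
  exact ENNReal.toReal_pos (measure_closedBall_pos μ 0 hr).ne' measure_closedBall_lt_top.ne

end GaussianOnBall

lemma densAtZero_pos (k : ℕ) {ν : ℝ} (hν : 0 < ν) : 0 < densAtZero k ν := by
  have hGamma : 0 < Gamma ((k : ℝ) / 2 + 1) := Gamma_pos_of_pos (by positivity)
  have hI := setIntegral_exp_neg_sq_norm_div_pos
    (volume : Measure (EuclideanSpace ℝ (Fin k))) hν.le one_pos
  unfold densAtZero
  positivity

lemma two_pi_mul_rpow_neg_div_two_div (k : ℕ) {ν ν' : ℝ} (hν : 0 < ν) (hν' : 0 < ν') :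
    (2 * π * ν) ^ (-(k : ℝ) / 2) / (2 * π * ν') ^ (-(k : ℝ) / 2) = (ν' / ν) ^ ((k : ℝ) / 2) := by
  rw [← div_rpow (by positivity) (by positivity), mul_div_mul_left _ _ (by positivity), neg_div,
    rpow_neg (by positivity), ← inv_rpow (by positivity), inv_div]

lemma exp_mul_rpow_le_densAtZero_div (k : ℕ) {νR νP : ℝ} (hR : 0 < νR) (hP : 0 < νP) :
    exp (-1 / (2 * νR)) * (νP / νR) ^ ((k : ℝ) / 2) ≤ densAtZero k νR / densAtZero k νP := by
  set I : ℝ → ℝ := fun ν =>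
    ∫ x in closedBall (0 : EuclideanSpace ℝ (Fin k)) 1, exp (-‖x‖ ^ 2 / (2 * ν))
  have hIP : 0 < I νP := setIntegral_exp_neg_sq_norm_div_pos volume hP.le one_pos
  have hGamma : 0 < Gamma ((k : ℝ) / 2 + 1) := Gamma_pos_of_pos (by positivity)
  have hI_div : exp (-1 / (2 * νR)) ≤ I νR / I νP := by
    rw [le_div_iff₀ hIP]
    simpa using exp_mul_setIntegral_exp_neg_sq_norm_div_le volume hR.le hP.le 1
  have hdiv : densAtZero k νR / densAtZero k νP = (νP / νR) ^ ((k : ℝ) / 2) * (I νR / I νP) := by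
    rw [densAtZero, densAtZero, mul_assoc (1 / _), mul_assoc (1 / _),
      mul_div_mul_left _ _ (by positivity), mul_div_mul_comm, two_pi_mul_rpow_neg_div_two_div k hR hP]
  rw [hdiv, mul_comm]
  exact mul_le_mul_of_nonneg_left hI_div (by positivity)

lemma Filter.Tendsto.div_add_nhds_one {α : Type*} {l : Filter α} {f g : α → ℝ}
    (h : Tendsto (fun x => f x / g x) l atTop) :
    Tendsto (fun x => f x / (f x + g x)) l (𝓝 1) := by
  have hlim : Tendsto (fun t : ℝ => 1 - (t + 1)⁻¹) atTop (𝓝 1) := by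
    have := (tendsto_const_nhds (x := (1 : ℝ))).sub
      (tendsto_inv_atTop_zero.comp (tendsto_atTop_add_const_right atTop 1 tendsto_id))
    simpa using this
  refine (hlim.comp h).congr' ?_
  filter_upwards [h.eventually_gt_atTop 0] with x hx
  have hg : g x ≠ 0 := fun hg => by simp [hg] at hx
  have hfg : f x + g x ≠ 0 := fun h0 => by
    rw [eq_neg_of_add_eq_zero_left h0, neg_div, div_self hg] at hx
    norm_num at hx
  simp only [Function.comp_apply]
  rw [div_add_one hg, inv_div, eq_comm, eq_sub_iff_add_eq, ← add_div, div_self hfg]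

theorem densAtZero_ratio_tendsto_atTop_of_noise_disparity_general
    (k : ℕ) (hk : 0 < k)
    (σR2 σP2 : ℕ → ℝ)
    (c : ℝ) (hc : 0 < c) (hRlim : Tendsto σR2 atTop (nhds c))
    (hratio : Tendsto (fun m => σP2 m / σR2 m) atTop atTop) :
    Tendsto (fun m : ℕ =>
        densAtZero k (2 * σR2 m) / densAtZero k (σR2 m + σP2 m)) atTop atTop ∧
    Tendsto (fun m : ℕ =>
        densAtZero k (2 * σR2 m) /
          (densAtZero k (2 * σR2 m) + densAtZero k (σR2 m + σP2 m)))
      atTop (nhds 1) := by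
  have hR_pos : ∀ᶠ m in atTop, 0 < σR2 m := hRlim.eventually (eventually_gt_nhds hc)
  have hν_div : Tendsto (fun m => (σR2 m + σP2 m) / (2 * σR2 m)) atTop atTop := by
    refine ((tendsto_atTop_add_const_right atTop 1 hratio).atTop_div_const two_pos).congr' ?_
    filter_upwards [hR_pos] with m hm
    rw [div_add_one hm.ne', div_div, mul_comm, add_comm (σP2 m)]
  have hP_pos : ∀ᶠ m in atTop, 0 < σR2 m + σP2 m := by
    filter_upwards [hR_pos, hν_div.eventually_gt_atTop 0] with m hR hdiv
    exact (div_pos_iff_of_pos_right (by positivity)).1 hdiv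
  have hexp : Tendsto (fun m => exp (-1 / (2 * (2 * σR2 m)))) atTop
      (𝓝 (exp (-1 / (2 * (2 * c))))) :=
    (tendsto_const_nhds.div (tendsto_const_nhds.mul (hRlim.const_mul 2)) (by positivity)).rexp
  have hlower := hexp.pos_mul_atTop (exp_pos _)
    ((tendsto_rpow_atTop (by positivity : (0 : ℝ) < k / 2)).comp hν_div)
  have hmain : Tendsto (fun m : ℕ =>
      densAtZero k (2 * σR2 m) / densAtZero k (σR2 m + σP2 m)) atTop atTop := by
    refine tendsto_atTop_mono' atTop ?_ hlower
    filter_upwards [hR_pos, hP_pos] with m hR hP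
    exact exp_mul_rpow_le_densAtZero_div k (by positivity) hP
  exact ⟨hmain, hmain.div_add_nhds_one⟩

/-- Large noise disparity: if `σ_{R,m}² → c > 0` and `σ_{P,m}²/σ_{R,m}² → ∞`, then with
`ν_{R,m} = 2σ_{R,m}²` and `ν_{P,m} = σ_{R,m}² + σ_{P,m}²`, the ratio
`f_k(ν_{R,m})/f_k(ν_{P,m}) → ∞` and `f_k(ν_{R,m})/(f_k(ν_{R,m}) + f_k(ν_{P,m})) → 1`
as `m → ∞`, for every fixed positive dimension `k`. -/
theorem densAtZero_ratio_tendsto_atTop_of_noise_disparity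
    (k : ℕ) (hk : 0 < k)
    (σR2 σP2 : ℕ → ℝ) (hRpos : ∀ m, 0 < σR2 m) (hPpos : ∀ m, 0 < σP2 m)
    (c : ℝ) (hc : 0 < c) (hRlim : Tendsto σR2 atTop (nhds c))
    (hratio : Tendsto (fun m => σP2 m / σR2 m) atTop atTop) :
    Tendsto (fun m : ℕ =>
        densAtZero k (2 * σR2 m) / densAtZero k (σR2 m + σP2 m)) atTop atTop ∧
    Tendsto (fun m : ℕ =>
        densAtZero k (2 * σR2 m) /
          (densAtZero k (2 * σR2 m) + densAtZero k (σR2 m + σP2 m)))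
      atTop (nhds 1) :=
  densAtZero_ratio_tendsto_atTop_of_noise_disparity_general k hk σR2 σP2 c hc hRlim hratio
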